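/- arXiv:1807.10060 — 2 statements merged into one kernel-verified Lean document; each statement's English description precedes it below -/
import Mathlib

section
/- Let m ≥ 1 be an odd natural number and let E ∈ ℝ. Then there exists a constant C > 0 such that for all x ∈ ℝ one has |x+1|^{m-1} · |x - E| ≤ C · |(x+1)^m - (E+1)^m|. -/
/-!
Put `a = x + 1`, `b = E + 1` and `m = n + 1` with `n` even; it suffices to show
`|a|ⁿ |a - b| ≤ 2 |aⁿ⁺¹ - bⁿ⁺¹|`. As `t ↦ tⁿ⁺¹` is odd we may assume `a ≥ 0`.
If also `b ≥ 0`, then `aⁿ⁺¹ - bⁿ⁺¹ = (a - b) ∑ aⁱ bⁿ⁻ⁱ` and the sum is at least its term `aⁿ`.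
If `b = -c < 0`, there is no cancellation: `|a - b| = a + c` and `|aⁿ⁺¹ - bⁿ⁺¹| = aⁿ⁺¹ + cⁿ⁺¹`,
while `aⁿ c ≤ max(a, c)ⁿ⁺¹ ≤ aⁿ⁺¹ + cⁿ⁺¹`.
-/

section OrderedRing

variable {R : Type*} [CommRing R] [LinearOrder R] [IsStrictOrderedRing R]

lemma pow_mul_abs_sub_le_abs_pow_succ_sub_pow_succ (n : ℕ) {a b : R} (ha : 0 ≤ a) (hb : 0 ≤ b) :
    a ^ n * |a - b| ≤ |a ^ (n + 1) - b ^ (n + 1)| := by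
  set S := ∑ i ∈ Finset.range (n + 1), a ^ i * b ^ (n - i)
  have hS : a ^ n ≤ S := by
    simpa using Finset.single_le_sum (f := fun i => a ^ i * b ^ (n - i))
      (fun i _ => by positivity) (Finset.self_mem_range_succ n)
  have hfactor : S * (a - b) = a ^ (n + 1) - b ^ (n + 1) := by
    simpa using geom_sum₂_mul a b (n + 1)
  rw [← hfactor, abs_mul, abs_of_nonneg ((pow_nonneg ha n).trans hS)]
  exact mul_le_mul_of_nonneg_right hS (abs_nonneg _)

lemma pow_mul_le_pow_succ_add_pow_succ (n : ℕ) {a c : R} (ha : 0 ≤ a) (hc : 0 ≤ c) :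
    a ^ n * c ≤ a ^ (n + 1) + c ^ (n + 1) := by
  rcases le_total a c with h | h
  · calc a ^ n * c ≤ c ^ n * c := by gcongr
      _ = c ^ (n + 1) := (pow_succ c n).symm
      _ ≤ a ^ (n + 1) + c ^ (n + 1) := le_add_of_nonneg_left (by positivity)
  · calc a ^ n * c ≤ a ^ n * a := by gcongr
      _ = a ^ (n + 1) := (pow_succ a n).symm
      _ ≤ a ^ (n + 1) + c ^ (n + 1) := le_add_of_nonneg_right (by positivity)

lemma pow_mul_abs_sub_le_two_mul_abs_pow_succ_sub_pow_succ_of_nonneg {n : ℕ} (hn : Even n)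
    {a : R} (ha : 0 ≤ a) (b : R) :
    a ^ n * |a - b| ≤ 2 * |a ^ (n + 1) - b ^ (n + 1)| := by
  rcases le_total 0 b with hb | hb
  · have := pow_mul_abs_sub_le_abs_pow_succ_sub_pow_succ n ha hb
    linarith [abs_nonneg (a ^ (n + 1) - b ^ (n + 1))]
  · obtain ⟨c, rfl⟩ : ∃ c, b = -c := ⟨-b, (neg_neg b).symm⟩
    have hc : 0 ≤ c := neg_nonpos.mp hb
    have hdiff : |a - -c| = a + c := by rw [sub_neg_eq_add, abs_of_nonneg (by positivity)]
    have hpow : |a ^ (n + 1) - (-c) ^ (n + 1)| = a ^ (n + 1) + c ^ (n + 1) := by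
      rw [hn.add_one.neg_pow, sub_neg_eq_add, abs_of_nonneg (by positivity)]
    rw [hdiff, hpow, mul_add, ← pow_succ]
    linarith [pow_mul_le_pow_succ_add_pow_succ n ha hc, pow_nonneg hc (n + 1)]

lemma abs_pow_mul_abs_sub_le_two_mul_abs_pow_succ_sub_pow_succ {n : ℕ} (hn : Even n) (a b : R) :
    |a| ^ n * |a - b| ≤ 2 * |a ^ (n + 1) - b ^ (n + 1)| := by
  rcases le_total 0 a with ha | ha
  · simpa [abs_of_nonneg ha] using
      pow_mul_abs_sub_le_two_mul_abs_pow_succ_sub_pow_succ_of_nonneg hn ha b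
  · have key := pow_mul_abs_sub_le_two_mul_abs_pow_succ_sub_pow_succ_of_nonneg hn
      (neg_nonneg.mpr ha) (-b)
    rwa [hn.add_one.neg_pow, hn.add_one.neg_pow, neg_sub_neg, neg_sub_neg, abs_sub_comm,
      abs_sub_comm (b ^ (n + 1)), ← abs_of_nonpos ha] at key

end OrderedRing

theorem gE_bounded_on_real_line_general (m : ℕ) (hodd : Odd m) (E : ℝ) :
    ∃ C : ℝ, 0 < C ∧ ∀ x : ℝ,
      |x + 1| ^ (m - 1) * |x - E| ≤ C * |(x + 1) ^ m - (E + 1) ^ m| := by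
  obtain ⟨k, rfl⟩ := hodd
  refine ⟨2, two_pos, fun x => ?_⟩
  simpa [add_sub_add_right_eq_sub] using
    abs_pow_mul_abs_sub_le_two_mul_abs_pow_succ_sub_pow_succ (even_two_mul k) (x + 1) (E + 1)

/-- For `m` odd, the rational function `g_E(x) = (x+1)^{m-1}(x-E)/((x+1)^m-(E+1)^m)` is
bounded on the real line: `|x+1|^{m-1}|x-E| ≤ C |(x+1)^m - (E+1)^m|`. -/
theorem gE_bounded_on_real_line (m : ℕ) (hm : 1 ≤ m) (hodd : Odd m) (E : ℝ) :
    ∃ C : ℝ, 0 < C ∧ ∀ x : ℝ,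
      |x + 1| ^ (m - 1) * |x - E| ≤ C * |(x + 1) ^ m - (E + 1) ^ m| :=
  gE_bounded_on_real_line_general m hodd E
end

section
/- Let m ≥ 1 be an odd natural number and let E ∈ ℝ. Then there exist ε₀ > 0 and a constant C > 0 such that for all x ∈ ℝ and all ε ∈ ℝ with 0 < |ε| < ε₀ one has |x+1|^{m-1} · |x - (E + iε)| ≤ C · |(x+1)^m - (1 + E + iε)^m|, where i denotes the imaginary unit and the absolute values on both sides are moduli of complex numbers. -/
/-!
Write `y = x + 1` and `w = 1 + E + iε`, so that `x - (E + iε) = y - w` and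
`y ^ m - w ^ m = ∏ (y - μ w)` over the `m`-th roots of unity `μ`. The factor `μ = 1` is `y - w`.
Since `m` is odd, every other root `μ` is neither real nor purely imaginary, so for `ε` near `0`
the point `μ w` stays at an angle bounded away from the real axis (when `E ≠ -1` because
`Im μ ≠ 0`, when `E = -1` because `Re μ ≠ 0`). Hence `|y - μ w| ≥ δ |y|` for every real `y`.
-/

open Filter Topology Complex ComplexConjugate

namespace Complex

theorem re_ne_zero_of_pow_eq_one {m : ℕ} (hodd : Odd m) {z : ℂ} (hz : z ^ m = 1) : z.re ≠ 0 := by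
  intro hre
  have hconj : conj z = -z := Complex.ext (by simp [hre]) (by simp)
  have : conj (z ^ m) = -z ^ m := by rw [map_pow, hconj, hodd.neg_pow]
  rw [hz, map_one] at this
  norm_num at this

theorem im_ne_zero_of_pow_eq_one {m : ℕ} (hodd : Odd m) {z : ℂ} (hz : z ^ m = 1) (hz1 : z ≠ 1) :
    z.im ≠ 0 := by
  intro him
  have hreal : z = z.re := Complex.ext (by simp) (by simp [him])
  have hre : z.re ^ m = 1 ^ m := by
    rw [one_pow]; exact_mod_cast hreal ▸ hz
  exact hz1 (by rw [hreal, hodd.strictMono_pow.injective hre, ofReal_one])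

end Complex

theorem norm_ofReal_sub_ge_of_abs_im_ge (y : ℝ) {a : ℂ} {γ : ℝ} (hγ0 : 0 ≤ γ) (hγ : γ ≤ 1)
    (ha : γ * ‖a‖ ≤ |a.im|) : γ / 2 * ‖(y : ℂ)‖ ≤ ‖(y : ℂ) - a‖ := by
  rcases le_or_gt ‖(y : ℂ)‖ (2 * ‖a‖) with hy | hy
  · have him : |a.im| ≤ ‖(y : ℂ) - a‖ := by
      simpa using abs_im_le_norm ((y : ℂ) - a)
    nlinarith [norm_nonneg a]
  · nlinarith [norm_sub_norm_le (y : ℂ) a, norm_nonneg (y : ℂ)]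

theorem eventually_abs_im_mul_ge {c : ℂ} (hre : c.re ≠ 0) (him : c.im ≠ 0) (u : ℝ) :
    ∃ γ > 0, ∀ᶠ ε : ℝ in 𝓝 0,
      γ * ‖c * ((u : ℂ) + ε * I)‖ ≤ |(c * ((u : ℂ) + ε * I)).im| := by
  have hc : 0 < ‖c‖ := norm_pos_iff.mpr fun h => hre (by simp [h])
  rcases eq_or_ne u 0 with rfl | hu
  · refine ⟨|c.re| / ‖c‖, by positivity, .of_forall fun ε => le_of_eq ?_⟩
    simp [abs_mul]
    field_simp
  · refine ⟨|c.im| / (2 * ‖c‖), by positivity, ?_⟩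
    have hlt : |c.im| / (2 * ‖c‖) * ‖c * ((u : ℂ) + (0 : ℝ) * I)‖
        < |(c * ((u : ℂ) + (0 : ℝ) * I)).im| := by
      simp [abs_mul]
      field_simp
      nlinarith [abs_pos.mpr hu, abs_pos.mpr him]
    exact (ContinuousAt.eventually_lt (by fun_prop) (by fun_prop) hlt).mono fun _ h => h.le

theorem eventually_norm_ofReal_sub_mul_ge {c : ℂ} (hre : c.re ≠ 0) (him : c.im ≠ 0) (u : ℝ) :
    ∃ δ > 0, ∀ᶠ ε : ℝ in 𝓝 0, ∀ y : ℝ,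
      δ * ‖(y : ℂ)‖ ≤ ‖(y : ℂ) - c * ((u : ℂ) + ε * I)‖ := by
  obtain ⟨γ, hγ, hev⟩ := eventually_abs_im_mul_ge hre him u
  refine ⟨min γ 1 / 2, by positivity, hev.mono fun ε h y => ?_⟩
  refine norm_ofReal_sub_ge_of_abs_im_ge y (by positivity) (min_le_right _ _) ?_
  exact (mul_le_mul_of_nonneg_right (min_le_left _ _) (norm_nonneg _)).trans h

theorem eventually_forall_mem_norm_ofReal_sub_mul_ge (S : Finset ℂ)
    (hS : ∀ c ∈ S, c.re ≠ 0 ∧ c.im ≠ 0) (u : ℝ) :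
    ∃ δ > 0, ∀ᶠ ε : ℝ in 𝓝 0, ∀ c ∈ S, ∀ y : ℝ,
      δ * ‖(y : ℂ)‖ ≤ ‖(y : ℂ) - c * ((u : ℂ) + ε * I)‖ := by
  classical
  induction S using Finset.induction_on with
  | empty => exact ⟨1, one_pos, .of_forall fun _ c hc => absurd hc (Finset.notMem_empty c)⟩
  | insert a S _ ih =>
    obtain ⟨δa, hδa, hev_a⟩ := eventually_norm_ofReal_sub_mul_ge
      (hS a (Finset.mem_insert_self a S)).1 (hS a (Finset.mem_insert_self a S)).2 u
    obtain ⟨δS, hδS, hev_S⟩ := ih fun c hc => hS c (Finset.mem_insert_of_mem hc)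
    refine ⟨min δa δS, lt_min hδa hδS, ?_⟩
    filter_upwards [hev_a, hev_S] with ε hεa hεS c hc y
    rcases Finset.mem_insert.mp hc with rfl | hc
    · exact (mul_le_mul_of_nonneg_right (min_le_left _ _) (norm_nonneg _)).trans (hεa y)
    · exact (mul_le_mul_of_nonneg_right (min_le_right _ _) (norm_nonneg _)).trans (hεS c hc y)

theorem norm_pow_sub_pow_ge_of_forall_root {K : Type*} [NormedField K] [DecidableEq K] {m : ℕ}
    (hm : 0 < m) {ζ : K} (hζ : IsPrimitiveRoot ζ m) {y w : K} {δ : ℝ} (hδ : 0 ≤ δ)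
    (h : ∀ c ∈ (Polynomial.nthRootsFinset m (1 : K)).erase 1, δ * ‖y‖ ≤ ‖y - c * w‖) :
    δ ^ (m - 1) * (‖y‖ ^ (m - 1) * ‖y - w‖) ≤ ‖y ^ m - w ^ m‖ := by
  have h1 : (1 : K) ∈ Polynomial.nthRootsFinset m (1 : K) :=
    (Polynomial.mem_nthRootsFinset hm 1).mpr (one_pow m)
  rw [hζ.pow_sub_pow_eq_prod_sub_mul y w hm, ← Finset.mul_prod_erase _ _ h1, norm_mul,
    norm_prod, one_mul, ← mul_assoc, ← mul_pow, mul_comm]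
  have hcard : ((Polynomial.nthRootsFinset m (1 : K)).erase 1).card = m - 1 := by
    rw [Finset.card_erase_of_mem h1, hζ.card_nthRootsFinset]
  gcongr
  rw [← hcard, ← Finset.prod_const]
  exact Finset.prod_le_prod (fun _ _ => by positivity) h

theorem gz_bounded_uniformly_near_real_energy_general (m : ℕ) (hodd : Odd m) (E : ℝ) :
    ∃ ε₀ C : ℝ, 0 < ε₀ ∧ 0 < C ∧ ∀ x : ℝ, ∀ ε : ℝ, 0 < |ε| → |ε| < ε₀ →
      ‖(x : ℂ) + 1‖ ^ (m - 1) *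
          ‖(x : ℂ) - ((E : ℂ) + (ε : ℂ) * Complex.I)‖ ≤
        C * ‖((x : ℂ) + 1) ^ m - (1 + (E : ℂ) + (ε : ℂ) * Complex.I) ^ m‖ := by
  have hroots : ∀ c ∈ (Polynomial.nthRootsFinset m (1 : ℂ)).erase 1, c.re ≠ 0 ∧ c.im ≠ 0 := by
    intro c hc
    obtain ⟨hc1, hcm⟩ := Finset.mem_erase.mp hc
    rw [Polynomial.mem_nthRootsFinset hodd.pos] at hcm
    exact ⟨re_ne_zero_of_pow_eq_one hodd hcm, im_ne_zero_of_pow_eq_one hodd hcm hc1⟩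
  obtain ⟨δ, hδ, hev⟩ := eventually_forall_mem_norm_ofReal_sub_mul_ge _ hroots (1 + E)
  obtain ⟨ε₀, hε₀, hball⟩ := Metric.eventually_nhds_iff.mp hev
  refine ⟨ε₀, (δ ^ (m - 1))⁻¹, hε₀, by positivity, fun x ε _ hε => ?_⟩
  have key := norm_pow_sub_pow_ge_of_forall_root hodd.pos
    (isPrimitiveRoot_exp m hodd.pos.ne') hδ.le (hball (by simpa using hε) · · (x + 1))
  rw [le_inv_mul_iff₀ (by positivity),
    show (x : ℂ) - (E + ε * I) = x + 1 - (1 + E + ε * I) by ring]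
  push_cast at key
  exact key

/-- For `m` odd and `E ∈ ℝ`, the rational function
`g_{E+iε}(x) = (x+1)^{m-1}(x-(E+iε))/((x+1)^m-(1+E+iε)^m)` is bounded on the real line,
uniformly for small `ε ≠ 0`. -/
theorem gz_bounded_uniformly_near_real_energy (m : ℕ) (hm : 1 ≤ m) (hodd : Odd m) (E : ℝ) :
    ∃ ε₀ C : ℝ, 0 < ε₀ ∧ 0 < C ∧ ∀ x : ℝ, ∀ ε : ℝ, 0 < |ε| → |ε| < ε₀ →
      ‖(x : ℂ) + 1‖ ^ (m - 1) *
          ‖(x : ℂ) - ((E : ℂ) + (ε : ℂ) * Complex.I)‖ ≤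
        C * ‖((x : ℂ) + 1) ^ m - (1 + (E : ℂ) + (ε : ℂ) * Complex.I) ^ m‖ :=
  gz_bounded_uniformly_near_real_energy_general m hodd E
end
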